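/- Let N ⊆ M_d(ℂ) be a unital *-subalgebra, E : M_d(ℂ) → N the trace-preserving conditional expectation onto N, and σ, ρ positive definite states on M_d(ℂ). Then ρ = σ σ_N^{−1} ρ_N if and only if σ^{1/2} σ_N^{−1/2} Γ_N^{1/2} σ_N^{1/2} = Γ^{1/2} σ^{1/2}. -/

import Mathlib

open Matrix MeasureTheory Filter Topology Kronecker ComplexOrder

/-- Apply a real function to a matrix via the functional calculus for Hermitian
matrices (and return `0` on non-Hermitian input). -/
noncomputable def mfun {d : ℕ} (f : ℝ → ℝ) (A : Matrix (Fin d) (Fin d) ℂ) :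
    Matrix (Fin d) (Fin d) ℂ :=
  if hA : A.IsHermitian then hA.cfc f else 0

/-- Square root of a Hermitian positive semidefinite matrix. -/
noncomputable def msqrt {d : ℕ} (A : Matrix (Fin d) (Fin d) ℂ) : Matrix (Fin d) (Fin d) ℂ :=
  mfun Real.sqrt A

/-- Inverse square root of a Hermitian positive semidefinite matrix (Moore–Penrose
pseudoinverse of the square root in the singular case, since `(0 : ℝ)⁻¹ = 0`). -/
noncomputable def misqrt {d : ℕ} (A : Matrix (Fin d) (Fin d) ℂ) : Matrix (Fin d) (Fin d) ℂ :=
  mfun (fun x => (Real.sqrt x)⁻¹) A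

/-- Inverse of a Hermitian matrix (Moore–Penrose pseudoinverse in the singular case). -/
noncomputable def minv {d : ℕ} (A : Matrix (Fin d) (Fin d) ℂ) : Matrix (Fin d) (Fin d) ℂ :=
  mfun (fun x => x⁻¹) A

/-- Logarithm of a positive definite matrix. -/
noncomputable def mlog {d : ℕ} (A : Matrix (Fin d) (Fin d) ℂ) : Matrix (Fin d) (Fin d) ℂ :=
  mfun Real.log A

/-- Frobenius (Schatten-2) norm ‖A‖₂ = tr(AᴴA)^(1/2). -/
noncomputable def frob {n : Type*} [Fintype n] (A : Matrix n n ℂ) : ℝ :=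
  Real.sqrt (Matrix.trace (Aᴴ * A)).re

/-- Operator norm ‖A‖∞ of a matrix, acting on the Euclidean space ℂᵈ. -/
noncomputable def opNorm {n : Type*} [Fintype n] [DecidableEq n] (A : Matrix n n ℂ) : ℝ :=
  ‖LinearMap.toContinuousLinearMap (Matrix.toEuclideanLin A)‖

/-- The Belavkin–Staszewski relative entropy
`Ŝ_BS(σ‖ρ) = −tr[σ log(σ^{−1/2} ρ σ^{−1/2})]`. -/
noncomputable def BS {d : ℕ} (σ ρ : Matrix (Fin d) (Fin d) ℂ) : ℝ :=
  -(Matrix.trace (σ * mlog (misqrt σ * ρ * misqrt σ))).re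

/-- The maximal f-divergence `Ŝ_f(σ‖ρ) = tr[ρ^{1/2} f(ρ^{−1/2} σ ρ^{−1/2}) ρ^{1/2}]`. -/
noncomputable def hatS {d : ℕ} (f : ℝ → ℝ) (σ ρ : Matrix (Fin d) (Fin d) ℂ) : ℝ :=
  (Matrix.trace (msqrt ρ * mfun f (misqrt ρ * σ * misqrt ρ) * msqrt ρ)).re

/-- The Umegaki relative entropy `D(σ‖ρ) = tr[σ (log σ − log ρ)]`. -/
noncomputable def relEnt {d : ℕ} (σ ρ : Matrix (Fin d) (Fin d) ℂ) : ℝ :=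
  (Matrix.trace (σ * (mlog σ - mlog ρ))).re

/-- The Choi matrix of a linear map between matrix algebras. -/
noncomputable def choi {d₁ d₂ : ℕ} (T : Matrix (Fin d₁) (Fin d₁) ℂ →ₗ[ℂ] Matrix (Fin d₂) (Fin d₂) ℂ) :
    Matrix (Fin d₁ × Fin d₂) (Fin d₁ × Fin d₂) ℂ :=
  Matrix.of fun p q => T (Matrix.single p.1 q.1 1) p.2 q.2

/-- A quantum channel: a completely positive (equivalently, with positive semidefinite Choi
matrix) trace-preserving linear map. -/
def IsCPTP {d₁ d₂ : ℕ} (T : Matrix (Fin d₁) (Fin d₁) ℂ →ₗ[ℂ] Matrix (Fin d₂) (Fin d₂) ℂ) :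
    Prop :=
  (choi T).PosSemidef ∧ ∀ A, (T A).trace = A.trace

/-- Partial trace over the second tensor factor. -/
noncomputable def ptrace2 {d₂ s : ℕ} (M : Matrix (Fin d₂ × Fin s) (Fin d₂ × Fin s) ℂ) :
    Matrix (Fin d₂) (Fin d₂) ℂ :=
  Matrix.of fun i j => ∑ k : Fin s, M (i, k) (j, k)

/-- The Loewner order: `A ≤ B` iff `B - A` is positive semidefinite. -/
def Loewner {n : ℕ} (A B : Matrix (Fin n) (Fin n) ℂ) : Prop := (B - A).PosSemidef

/-- A function `f : (0,∞) → ℝ` is operator convex. -/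
def OperatorConvex (f : ℝ → ℝ) : Prop :=
  ∀ (n : ℕ) (A B : Matrix (Fin n) (Fin n) ℂ), A.PosDef → B.PosDef →
    ∀ t : ℝ, 0 ≤ t → t ≤ 1 →
      Loewner (mfun f ((t : ℂ) • A + ((1 - t : ℝ) : ℂ) • B))
        ((t : ℂ) • mfun f A + ((1 - t : ℝ) : ℂ) • mfun f B)

/-- A function `f : (0,∞) → ℝ` is operator monotone decreasing. -/
def OperatorAntitone (f : ℝ → ℝ) : Prop :=
  ∀ (n : ℕ) (A B : Matrix (Fin n) (Fin n) ℂ), A.PosDef → B.PosDef →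
    Loewner A B → Loewner (mfun f B) (mfun f A)

/-
Put `T = σ^{1/2} σ_N^{-1/2}`. The left-hand equation says `Γ = T Γ_N T⁻¹`, the right-hand one
says `Γ^{1/2} = T Γ_N^{1/2} T⁻¹`, and squaring the latter gives the former. Conversely, if
`Γ = T Γ_N T⁻¹`, self-adjointness of `Γ` forces `T* T` to commute with `Γ_N`, hence with
`Γ_N^{1/2}`; so `T Γ_N^{1/2} T⁻¹` is self-adjoint with the nonnegative spectrum of `Γ_N^{1/2}`,
a positive square root of `Γ`, and therefore equal to `Γ^{1/2}`.
-/

open scoped MatrixOrder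

theorem IsSelfAdjoint.units_conj_iff_commute {R : Type*} [Ring R] [StarRing R] (u : Rˣ) {x : R}
    (hx : IsSelfAdjoint x) :
    IsSelfAdjoint (u * x * ↑u⁻¹) ↔ Commute (star (u : R) * u) x := by
  have hcongr : star (u : R) * (u * x * ↑u⁻¹) * u = star (u : R) * u * x := by
    simp only [mul_assoc, u.inv_mul, mul_one]
  rw [(IsSelfAdjoint.star_mul_self (u : R)).commute_iff hx, ← hcongr]
  refine ⟨fun h => h.conjugate' _, fun h => ?_⟩
  have hstar : star (↑u⁻¹ : R) * star (u : R) = 1 := by rw [← star_mul, u.mul_inv, star_one]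
  simpa only [← mul_assoc, hstar, one_mul, Units.mul_inv_cancel_right] using
    h.conjugate' (↑u⁻¹ : R)

theorem Units.conj_mul_conj {R : Type*} [Monoid R] (u : Rˣ) (x y : R) :
    u * x * ↑u⁻¹ * (u * y * ↑u⁻¹) = u * (x * y) * ↑u⁻¹ := by
  simp only [mul_assoc, Units.inv_mul_cancel_left]

namespace CFC

variable {A : Type*} [PartialOrder A] [Ring A] [StarRing A] [TopologicalSpace A]
  [StarOrderedRing A] [Algebra ℝ A] [ContinuousFunctionalCalculus ℝ A IsSelfAdjoint]
  [NonnegSpectrumClass ℝ A] [IsTopologicalRing A] [T2Space A]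

theorem sqrt_units_conj (u : Aˣ) {b : A} (hb : 0 ≤ b) (h : IsSelfAdjoint (u * b * ↑u⁻¹)) :
    sqrt (u * b * ↑u⁻¹) = u * sqrt b * ↑u⁻¹ := by
  have hcomm : Commute (star (u : A) * u) (sqrt b) := by
    rw [sqrt_eq_cfc]
    exact (((hb.isSelfAdjoint.units_conj_iff_commute u).mp h).symm.cfc_nnreal _).symm
  have hsa : IsSelfAdjoint (u * sqrt b * ↑u⁻¹) :=
    ((sqrt_nonneg b).isSelfAdjoint.units_conj_iff_commute u).mpr hcomm
  refine sqrt_unique (by rw [Units.conj_mul_conj, sqrt_mul_sqrt_self b hb]) ?_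
  rw [StarOrderedRing.nonneg_iff_spectrum_nonneg (R := ℝ) _ hsa, spectrum.units_conjugate]
  exact (StarOrderedRing.nonneg_iff_spectrum_nonneg (R := ℝ) _).mp (sqrt_nonneg b)

theorem sqrt_eq_units_conj_sqrt_iff (u : Aˣ) {a b : A} (ha : 0 ≤ a) (hb : 0 ≤ b) :
    sqrt a = u * sqrt b * ↑u⁻¹ ↔ a = u * b * ↑u⁻¹ := by
  constructor
  · intro h
    rw [← sqrt_mul_sqrt_self a ha, h, Units.conj_mul_conj, sqrt_mul_sqrt_self b hb]
  · rintro rfl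
    exact sqrt_units_conj u hb ha.isSelfAdjoint

theorem eq_sq_mul_inv_sq_mul_iff (a b : Aˣ) {x y : A} (hx : 0 ≤ ↑a⁻¹ * x * ↑a⁻¹)
    (hy : 0 ≤ ↑b⁻¹ * y * ↑b⁻¹) :
    x = a * a * (↑b⁻¹ * ↑b⁻¹) * y ↔
      a * ↑b⁻¹ * sqrt (↑b⁻¹ * y * ↑b⁻¹) * b = sqrt (↑a⁻¹ * x * ↑a⁻¹) * a := by
  have hconj : ∀ z : A, ↑(a * b⁻¹) * z * ↑(a * b⁻¹)⁻¹ = a * ↑b⁻¹ * z * b * ↑a⁻¹ := fun z => by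
    simp only [_root_.mul_inv_rev, Units.val_mul, inv_inv, mul_assoc]
  calc x = a * a * (↑b⁻¹ * ↑b⁻¹) * y
      ↔ ↑a⁻¹ * x * ↑a⁻¹ = ↑(a * b⁻¹) * (↑b⁻¹ * y * ↑b⁻¹) * ↑(a * b⁻¹)⁻¹ := by
        rw [hconj, Units.mul_left_inj, Units.inv_mul_eq_iff_eq_mul]
        simp only [mul_assoc, Units.inv_mul, mul_one]
    _ ↔ sqrt (↑a⁻¹ * x * ↑a⁻¹) = ↑(a * b⁻¹) * sqrt (↑b⁻¹ * y * ↑b⁻¹) * ↑(a * b⁻¹)⁻¹ :=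
        (sqrt_eq_units_conj_sqrt_iff _ hx hy).symm
    _ ↔ _ := by
        rw [hconj, Units.eq_mul_inv_iff_mul_eq, eq_comm]

end CFC

section PosDef

variable {𝕜 m n : Type*} [RCLike 𝕜] [Fintype m] [DecidableEq m] [DecidableEq n]
  {A : Matrix m m 𝕜}

theorem Matrix.PosDef.pos_of_mem_spectrum (hA : A.PosDef) {x : ℝ} (hx : x ∈ spectrum ℝ A) :
    0 < x :=
  (StarOrderedRing.isStrictlyPositive_iff_spectrum_pos A).mp
    (isStrictlyPositive_iff_posDef.mpr hA) x hx

theorem Matrix.PosDef.exists_pos_algebraMap_le (hA : A.PosDef) :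
    ∃ r > 0, algebraMap ℝ (Matrix m m 𝕜) r ≤ A := by
  cases subsingleton_or_nontrivial (Matrix m m 𝕜)
  · exact ⟨1, one_pos, (Subsingleton.elim _ _).le⟩
  · exact (CFC.exists_pos_algebraMap_le_iff hA.isHermitian.isSelfAdjoint).mpr
      fun _ => hA.pos_of_mem_spectrum

theorem Matrix.PosDef.map_of_posSemidef_map (E : Matrix m m 𝕜 →ₗ[𝕜] Matrix n n 𝕜)
    (hE : ∀ B, B.PosSemidef → (E B).PosSemidef) (hE1 : E 1 = 1) (hA : A.PosDef) :
    (E A).PosDef := by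
  obtain ⟨r, hr, hrA⟩ := hA.exists_pos_algebraMap_le
  rw [Algebra.algebraMap_eq_smul_one] at hrA
  have hsplit : E A = E (A - r • 1) + r • 1 := by
    rw [map_sub, E.map_smul_of_tower, hE1, sub_add_cancel]
  rw [hsplit]
  exact PosDef.posSemidef_add (hE _ (le_iff.mp hrA)) (PosDef.one.smul hr)

theorem Matrix.PosDef.cfc_mul_cfc_eq {f g h : ℝ → ℝ} (hA : A.PosDef)
    (hfgh : ∀ x, 0 < x → f x * g x = h x) : cfc f A * cfc g A = cfc h A := by
  have hfin := A.finite_real_spectrum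
  rw [← cfc_mul f g A (hfin.continuousOn f) (hfin.continuousOn g)]
  exact cfc_congr fun x hx => hfgh x (hA.pos_of_mem_spectrum hx)

end PosDef

section FunctionalCalculus

variable {d : ℕ} {A : Matrix (Fin d) (Fin d) ℂ}

theorem mfun_eq_cfc (hA : A.IsHermitian) (f : ℝ → ℝ) : mfun f A = cfc f A := by
  rw [mfun, dif_pos hA, hA.cfc_eq]

theorem msqrt_eq_sqrt (hA : A.PosSemidef) : msqrt A = CFC.sqrt A := by
  rw [msqrt, mfun_eq_cfc hA.1, CFC.sqrt_eq_real_sqrt A hA.nonneg, cfcₙ_eq_cfc]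

theorem msqrt_mul_self (hA : A.PosSemidef) : msqrt A * msqrt A = A := by
  rw [msqrt_eq_sqrt hA]
  exact CFC.sqrt_mul_sqrt_self A hA.nonneg

theorem msqrt_mul_misqrt (hA : A.PosDef) : msqrt A * misqrt A = 1 := by
  rw [msqrt, misqrt, mfun_eq_cfc hA.1, mfun_eq_cfc hA.1, ← cfc_const_one ℝ A]
  exact hA.cfc_mul_cfc_eq fun x hx => mul_inv_cancel₀ (Real.sqrt_pos.mpr hx).ne'

theorem misqrt_mul_msqrt (hA : A.PosDef) : misqrt A * msqrt A = 1 := by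
  rw [msqrt, misqrt, mfun_eq_cfc hA.1, mfun_eq_cfc hA.1, ← cfc_const_one ℝ A]
  exact hA.cfc_mul_cfc_eq fun x hx => inv_mul_cancel₀ (Real.sqrt_pos.mpr hx).ne'

theorem misqrt_mul_misqrt (hA : A.PosDef) : misqrt A * misqrt A = minv A := by
  rw [misqrt, minv, mfun_eq_cfc hA.1, mfun_eq_cfc hA.1]
  exact hA.cfc_mul_cfc_eq fun x hx => by rw [← mul_inv, Real.mul_self_sqrt hx.le]

theorem mfun_isHermitian (f : ℝ → ℝ) (A : Matrix (Fin d) (Fin d) ℂ) :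
    (mfun f A).IsHermitian := by
  rw [mfun]
  split_ifs with hA
  · rw [← hA.cfc_eq]
    exact cfc_predicate f A
  · exact isHermitian_zero

theorem Matrix.PosSemidef.misqrt_mul_mul_misqrt {B : Matrix (Fin d) (Fin d) ℂ}
    (hB : B.PosSemidef) (A : Matrix (Fin d) (Fin d) ℂ) :
    (misqrt A * B * misqrt A).PosSemidef := by
  have hA : (misqrt A).IsHermitian := mfun_isHermitian _ A
  simpa only [hA.eq] using hB.mul_mul_conjTranspose_same (misqrt A)

noncomputable def Matrix.PosDef.msqrtUnit (hA : A.PosDef) : (Matrix (Fin d) (Fin d) ℂ)ˣ :=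
  ⟨msqrt A, misqrt A, msqrt_mul_misqrt hA, misqrt_mul_msqrt hA⟩

@[simp]
theorem Matrix.PosDef.val_msqrtUnit (hA : A.PosDef) :
    (hA.msqrtUnit : Matrix (Fin d) (Fin d) ℂ) = msqrt A :=
  rfl

@[simp]
theorem Matrix.PosDef.val_inv_msqrtUnit (hA : A.PosDef) :
    (↑hA.msqrtUnit⁻¹ : Matrix (Fin d) (Fin d) ℂ) = misqrt A :=
  rfl

end FunctionalCalculus

theorem stmt5_general {d : ℕ}
    (N : Subalgebra ℂ (Matrix (Fin d) (Fin d) ℂ))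
    (E : Matrix (Fin d) (Fin d) ℂ →ₗ[ℂ] Matrix (Fin d) (Fin d) ℂ)
    (hEpos : ∀ A : Matrix (Fin d) (Fin d) ℂ, A.PosSemidef → (E A).PosSemidef)
    (hEfix : ∀ B ∈ N, E B = B)
    (σ ρ : Matrix (Fin d) (Fin d) ℂ)
    (hσ : σ.PosDef)
    (hρ : ρ.PosDef) :
    ρ = σ * minv (E σ) * E ρ ↔
      msqrt σ * misqrt (E σ) * msqrt (misqrt (E σ) * E ρ * misqrt (E σ)) * msqrt (E σ) =
        msqrt (misqrt σ * ρ * misqrt σ) * msqrt σ := by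
  have hσN : (E σ).PosDef := hσ.map_of_posSemidef_map E hEpos (hEfix 1 N.one_mem)
  have hΓ := hρ.posSemidef.misqrt_mul_mul_misqrt σ
  have hΓN := (hEpos ρ hρ.posSemidef).misqrt_mul_mul_misqrt (E σ)
  have key := CFC.eq_sq_mul_inv_sq_mul_iff hσ.msqrtUnit hσN.msqrtUnit hΓ.nonneg hΓN.nonneg
  simp only [PosDef.val_msqrtUnit, PosDef.val_inv_msqrtUnit] at key
  rwa [msqrt_mul_self hσ.posSemidef, misqrt_mul_misqrt hσN, ← msqrt_eq_sqrt hΓ,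
    ← msqrt_eq_sqrt hΓN] at key

theorem stmt5 {d : ℕ}
    (N : Subalgebra ℂ (Matrix (Fin d) (Fin d) ℂ))
    (hNstar : ∀ A ∈ N, Aᴴ ∈ N)
    (E : Matrix (Fin d) (Fin d) ℂ →ₗ[ℂ] Matrix (Fin d) (Fin d) ℂ)
    (hEpos : ∀ A : Matrix (Fin d) (Fin d) ℂ, A.PosSemidef → (E A).PosSemidef)
    (hEmem : ∀ A : Matrix (Fin d) (Fin d) ℂ, E A ∈ N)
    (hEfix : ∀ B ∈ N, E B = B)
    (hEmod : ∀ (A : Matrix (Fin d) (Fin d) ℂ), ∀ B ∈ N, E (A * B) = E A * B)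
    (hEtr : ∀ A : Matrix (Fin d) (Fin d) ℂ, (E A).trace = A.trace)
    (σ ρ : Matrix (Fin d) (Fin d) ℂ)
    (hσ : σ.PosDef) (hσtr : σ.trace = 1)
    (hρ : ρ.PosDef) (hρtr : ρ.trace = 1) :
    ρ = σ * minv (E σ) * E ρ ↔
      msqrt σ * misqrt (E σ) * msqrt (misqrt (E σ) * E ρ * misqrt (E σ)) * msqrt (E σ) =
        msqrt (misqrt σ * ρ * misqrt σ) * msqrt σ :=
  stmt5_general N E hEpos hEfix σ ρ hσ hρ
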